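/- arXiv:1308.4822 — 2 statements merged into one kernel-verified Lean document; each statement's English description precedes it below -/
import Mathlib

section
/- (Filter and ideal elements) Let L be a bounded lattice, X = D♭(L), and φ ∈ C(X) = MPE(X,2). Then the following are equivalent: (1) φ is a filter element of C(X); (2) φ⁻¹(1) = ⋂{W_b : b ∈ K} for some K ⊆ L; (3) φ⁻¹(1) is a τ-closed subset of MPH(L,2_B). Dually, the following are equivalent: (1') φ is an ideal element of C(X); (2') φ⁻¹(0) = ⋂{V_a : a ∈ M} for some M ⊆ L; (3') φ⁻¹(0) is a τ-closed subset of MPH(L,2_B). -/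
/-!
For a reflexive relation `E`, a maximal partial `E`-preserving map into `2` is determined by
its `1`- and `0`-preimages, and these form a formal concept of the relation `¬ E`. Hence `C(X)`
is a concept lattice: meets intersect `1`-preimages and joins intersect `0`-preimages. As `e_a`
has preimages `W_a` and `V_a`, the filter elements are exactly the `φ` with `φ⁻¹(1)` an
intersection of sets `W_b`, and such a set is `τ`-closed. Conversely, `MPH(L, 2_B)` is compact:
the pointwise limit of MPHs along an ultrafilter is a partial homomorphism, and any maximal
extension of it is a limit point. By compactness, a closed `φ⁻¹(1)` is the intersection of the
`W_v` containing it. Ideal elements are handled dually.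
-/

namespace CanExt

open Classical

/-- A partial map from `X` into the two-element chain `{0,1}` (encoded as `Bool`,
with `false` playing the role of `0` and `true` the role of `1`);
`φ x = none` means `x` is outside the domain of `φ`. -/
abbrev PMap (X : Type*) := X → Option Bool

/-- The preimage of `1` of a partial map. -/
def pre1 {X : Type*} (φ : PMap X) : Set X := {x | φ x = some true}

/-- The preimage of `0` of a partial map. -/
def pre0 {X : Type*} (φ : PMap X) : Set X := {x | φ x = some false}

/-- A partial map is `E`-preserving if whenever `x, y` lie in its domain and
`(x,y) ∈ E`, then `φ x ≤ φ y`. -/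
def EPres {X : Type*} (E : X → X → Prop) (φ : PMap X) : Prop :=
  ∀ ⦃x y : X⦄, E x y → ∀ ⦃a b : Bool⦄, φ x = some a → φ y = some b → a ≤ b

/-- `PExt ψ φ` : the partial map `ψ` extends the partial map `φ`. -/
def PExt {X : Type*} (ψ φ : PMap X) : Prop :=
  ∀ ⦃x : X⦄ ⦃a : Bool⦄, φ x = some a → ψ x = some a

/-- The set of maximal partial `E`-preserving maps from `(X,E)` into the
two-element chain `2`. -/
def MPE {X : Type*} (E : X → X → Prop) : Set (PMap X) :=
  {φ | EPres E φ ∧ ∀ ψ : PMap X, EPres E ψ → PExt ψ φ → ψ = φ}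

/-- A partial morphism from a graph with topology `(X,E,t)` to `2_τ`:
the preimages of `1` and `0` are `t`-closed (equivalently, the domain is
closed and the restriction to the domain is continuous into discrete `2`),
and the map is `E`-preserving. -/
def PMorphT {X : Type*} (E : X → X → Prop) (t : TopologicalSpace X) (φ : PMap X) : Prop :=
  EPres E φ ∧ @IsClosed X t (pre1 φ) ∧ @IsClosed X t (pre0 φ)

/-- The set of maximal partial morphisms from `(X,E,t)` to `2_τ`. -/
def MPM {X : Type*} (E : X → X → Prop) (t : TopologicalSpace X) : Set (PMap X) :=
  {φ | PMorphT E t φ ∧ ∀ ψ : PMap X, PMorphT E t ψ → PExt ψ φ → ψ = φ}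

/-- The relation `E` between partial maps on a lattice `L`:
`(f,g) ∈ E` iff `f x ≤ g x` for all `x ∈ dom f ∩ dom g`. -/
def ErelP {L : Type*} (f g : PMap L) : Prop :=
  ∀ ⦃x : L⦄ ⦃a b : Bool⦄, f x = some a → g x = some b → a ≤ b

/-- `f ≤₁ g` iff `f⁻¹(1) ⊆ g⁻¹(1)`. -/
def le1 {L : Type*} (f g : PMap L) : Prop := pre1 f ⊆ pre1 g

/-- `f ≤₂ g` iff `f⁻¹(0) ⊆ g⁻¹(0)`. -/
def le2 {L : Type*} (f g : PMap L) : Prop := pre0 f ⊆ pre0 g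

section Lat

variable (L : Type*) [Lattice L] [BoundedOrder L]

/-- A partial homomorphism from a bounded lattice `L` to the two-element
bounded lattice `2_B`: its domain is a `{0,1}`-sublattice of `L` and the
restriction to the domain is a bounded-lattice homomorphism. -/
def PHom (f : PMap L) : Prop :=
  f ⊥ = some false ∧ f ⊤ = some true ∧
  ∀ ⦃a b : L⦄ ⦃x y : Bool⦄, f a = some x → f b = some y →
    f (a ⊓ b) = some (x ⊓ y) ∧ f (a ⊔ b) = some (x ⊔ y)

/-- The set of maximal partial homomorphisms (MPHs) from `L` to `2_B`. -/
def MPHset : Set (PMap L) := {f | PHom L f ∧ ∀ g : PMap L, PHom L g → PExt g f → g = f}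

/-- The underlying set of the graph `D♭(L)`. -/
abbrev MPHsub := {f : PMap L // f ∈ MPHset L}

/-- The relation `E` on `MPH(L, 2_B)`, giving the graph `D♭(L)`. -/
def EM (f g : MPHsub L) : Prop := ErelP f.1 g.1

/-- The evaluation map `e_a` on `MPH(L,2_B)` : `e_a(f) = f(a)` if `a ∈ dom f`. -/
def evalM (a : L) : PMap (MPHsub L) := fun f => f.1 a

/-- `V_a = {f ∈ MPH(L,2_B) : f(a) = 0}`. -/
def VaM (a : L) : Set (MPHsub L) := {f | f.1 a = some false}

/-- `W_a = {f ∈ MPH(L,2_B) : f(a) = 1}`. -/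
def WaM (a : L) : Set (MPHsub L) := {f | f.1 a = some true}

/-- The topology on `MPH(L,2_B)` with the sets `V_a`, `W_a` as a subbasis of
closed sets. -/
def tauM : TopologicalSpace (MPHsub L) :=
  TopologicalSpace.generateFrom {U | ∃ a : L, U = (VaM L a)ᶜ ∨ U = (WaM L a)ᶜ}

/-- A (nonempty) lattice filter. -/
def IsLatFilter (F : Set L) : Prop :=
  F.Nonempty ∧ (∀ ⦃a b : L⦄, a ∈ F → a ≤ b → b ∈ F) ∧
    (∀ ⦃a b : L⦄, a ∈ F → b ∈ F → a ⊓ b ∈ F)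

/-- A (nonempty) lattice ideal. -/
def IsLatIdeal (I : Set L) : Prop :=
  I.Nonempty ∧ (∀ ⦃a b : L⦄, a ∈ I → b ≤ a → b ∈ I) ∧
    (∀ ⦃a b : L⦄, a ∈ I → b ∈ I → a ⊔ b ∈ I)

/-- The set of special partial homomorphisms (SPHs) from `L` to `2_B`:
`f⁻¹(1)` is a nonempty filter, `f⁻¹(0)` is a nonempty ideal, and they are
disjoint. -/
def SPHset : Set (PMap L) :=
  {f | IsLatFilter L (pre1 f) ∧ IsLatIdeal L (pre0 f) ∧ Disjoint (pre1 f) (pre0 f)}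

/-- The underlying set of the graph `D̄♭(L)`. -/
abbrev SPHsub := {f : PMap L // f ∈ SPHset L}

/-- The relation `E` on `SPH(L, 2_B)`, giving the graph `D̄♭(L)`. -/
def ES (f g : SPHsub L) : Prop := ErelP f.1 g.1

/-- The evaluation map `ē_a` on `SPH(L,2_B)`. -/
def evalS (a : L) : PMap (SPHsub L) := fun f => f.1 a

/-- `V_a = {f ∈ SPH(L,2_B) : f(a) = 0}`. -/
def VaS (a : L) : Set (SPHsub L) := {f | f.1 a = some false}

/-- `W_a = {f ∈ SPH(L,2_B) : f(a) = 1}`. -/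
def WaS (a : L) : Set (SPHsub L) := {f | f.1 a = some true}

/-- The topology on `SPH(L,2_B)` with the sets `V_a`, `W_a` as a subbasis of
closed sets. -/
def tauS : TopologicalSpace (SPHsub L) :=
  TopologicalSpace.generateFrom {U | ∃ a : L, U = (VaS L a)ᶜ ∨ U = (WaS L a)ᶜ}

/-- The carrier of the completion built from `D♭(L)`. -/
abbrev CX := {φ : PMap (MPHsub L) // φ ∈ MPE (EM L)}

/-- The carrier of the completion built from `D̄♭(L)`. -/
abbrev CY := {φ : PMap (SPHsub L) // φ ∈ MPE (ES L)}

end Lat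

section PartialMaps

variable {X : Type*}

lemma disjoint_pre1_pre0 (φ : PMap X) : Disjoint (pre1 φ) (pre0 φ) :=
  Set.disjoint_left.2 fun x h1 h0 => by simp_all [pre1, pre0]

lemma eq_of_pre1_eq_of_pre0_eq {φ ψ : PMap X} (h1 : pre1 φ = pre1 ψ) (h0 : pre0 φ = pre0 ψ) :
    φ = ψ :=
  funext fun x => Option.ext fun
    | true => Set.ext_iff.1 h1 x
    | false => Set.ext_iff.1 h0 x

lemma pExt_iff {ψ φ : PMap X} : PExt ψ φ ↔ pre1 φ ⊆ pre1 ψ ∧ pre0 φ ⊆ pre0 ψ :=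
  ⟨fun h => ⟨fun _ hx => h hx, fun _ hx => h hx⟩, fun h x b hx => by
    cases b
    exacts [h.2 hx, h.1 hx]⟩

lemma PExt.antisymm {ψ φ : PMap X} (h : PExt ψ φ) (h' : PExt φ ψ) : ψ = φ :=
  funext fun _ => Option.ext fun _ => ⟨fun hx => h' hx, fun hx => h hx⟩

noncomputable def ofPre (A B : Set X) : PMap X :=
  fun x => if x ∈ A then some true else if x ∈ B then some false else none

lemma pre1_ofPre (A B : Set X) : pre1 (ofPre A B) = A := by
  ext x
  by_cases hA : x ∈ A <;> simp [pre1, ofPre, hA]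

lemma pre0_ofPre {A B : Set X} (h : Disjoint A B) : pre0 (ofPre A B) = B := by
  ext x
  by_cases hA : x ∈ A <;> by_cases hB : x ∈ B <;> simp [pre0, ofPre, hA, hB]
  exact Set.disjoint_left.1 h hA hB

lemma ePres_iff {E : X → X → Prop} {φ : PMap X} :
    EPres E φ ↔ pre0 φ ⊆ upperPolar Eᶜ (pre1 φ) := by
  refine ⟨fun h y hy x hx hxy => absurd (h hxy hx hy) (by decide),
    fun h x y hxy a b hx hy => ?_⟩
  cases a
  · exact Bool.false_le b
  cases b
  · exact absurd hxy (h hy hx)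
  · exact le_rfl

lemma erelP_iff_disjoint {f g : PMap X} : ErelP f g ↔ Disjoint (pre1 f) (pre0 g) := by
  refine ⟨fun h => Set.disjoint_left.2 fun x h1 h0 => absurd (h h1 h0) (by decide),
    fun h x a b ha hb => ?_⟩
  cases a
  · exact Bool.false_le b
  cases b
  · exact absurd hb (Set.disjoint_left.1 h ha)
  · exact le_rfl

end PartialMaps

section Concepts

variable {X : Type*} {E : X → X → Prop} [Std.Refl E]

instance : Std.Irrefl Eᶜ := ⟨fun x h => h (refl_of E x)⟩

variable (E) in
lemma disjoint_upperPolar_compl (A : Set X) :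
    Disjoint A (upperPolar Eᶜ A) :=
  Set.disjoint_left.2 fun x hx hx' => hx' hx (refl_of E x)

variable (E) in
lemma disjoint_lowerPolar_compl (B : Set X) :
    Disjoint (lowerPolar Eᶜ B) B :=
  Set.disjoint_left.2 fun x hx hx' => hx hx' (refl_of E x)

theorem mem_MPE_iff {φ : PMap X} :
    φ ∈ MPE E ↔
      upperPolar Eᶜ (pre1 φ) = pre0 φ ∧ lowerPolar Eᶜ (pre0 φ) = pre1 φ := by
  constructor
  · -- enlarging either preimage to the polar of the other gives an `E`-preserving extension
    rintro ⟨hpres, hmax⟩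
    have hB := disjoint_upperPolar_compl E (pre1 φ)
    have hA := disjoint_lowerPolar_compl E (pre0 φ)
    have h0 := hmax (ofPre (pre1 φ) (upperPolar Eᶜ (pre1 φ)))
      (ePres_iff.2 (by rw [pre1_ofPre, pre0_ofPre hB]))
      (pExt_iff.2 ⟨(pre1_ofPre _ _).ge, (pre0_ofPre hB).symm ▸ ePres_iff.1 hpres⟩)
    have h1 := hmax (ofPre (lowerPolar Eᶜ (pre0 φ)) (pre0 φ))
      (ePres_iff.2 (by rw [pre1_ofPre, pre0_ofPre hA]; exact subset_upperPolar_lowerPolar _ _))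
      (pExt_iff.2 ⟨(pre1_ofPre _ _).symm ▸ (subset_upperPolar_iff_subset_lowerPolar.1
        (ePres_iff.1 hpres)), (pre0_ofPre hA).ge⟩)
    refine ⟨?_, ?_⟩
    · rw [← pre0_ofPre hB, h0]
    · rw [← pre1_ofPre (lowerPolar Eᶜ (pre0 φ)) (pre0 φ), h1]
  · rintro ⟨h0, h1⟩
    refine ⟨ePres_iff.2 h0.ge, fun ψ hψ hext => ?_⟩
    obtain ⟨hext1, hext0⟩ := pExt_iff.1 hext
    have hψ0 := ePres_iff.1 hψ
    have hψ1 := subset_upperPolar_iff_subset_lowerPolar.1 hψ0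
    refine eq_of_pre1_eq_of_pre0_eq (hext1.antisymm' ?_) (hext0.antisymm' ?_)
    · exact h1 ▸ hψ1.trans (lowerPolar_anti _ hext0)
    · exact h0 ▸ hψ0.trans (upperPolar_anti _ hext1)

noncomputable def mpeEquivConcept : MPE E ≃ Concept X X Eᶜ where
  toFun φ := ⟨pre1 φ.1, pre0 φ.1, (mem_MPE_iff.1 φ.2).1, (mem_MPE_iff.1 φ.2).2⟩
  invFun c := ⟨ofPre c.extent c.intent, mem_MPE_iff.2 <| by
    rw [pre1_ofPre, pre0_ofPre c.disjoint_extent_intent]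
    exact ⟨c.upperPolar_extent, c.lowerPolar_intent⟩⟩
  left_inv φ := Subtype.ext <| eq_of_pre1_eq_of_pre0_eq (pre1_ofPre _ _)
    (pre0_ofPre (disjoint_pre1_pre0 φ.1))
  right_inv c := Concept.ext (pre1_ofPre _ _)

end Concepts

namespace MPE

variable {X : Type*} {E : X → X → Prop} [Std.Refl E]

/-- Not an instance: `MPE E` already carries the unrelated pointwise `≤` of
`X → Option Bool`. -/
noncomputable abbrev completeLattice : CompleteLattice (MPE E) := mpeEquivConcept.completeLattice

lemma le_iff_pre1_subset {φ ψ : MPE E} : completeLattice.le φ ψ ↔ pre1 φ.1 ⊆ pre1 ψ.1 :=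
  Iff.rfl

lemma pre1_sInf (S : Set (MPE E)) : pre1 (completeLattice.sInf S).1 = ⋂ φ ∈ S, pre1 φ.1 := by
  change (mpeEquivConcept (mpeEquivConcept.symm _)).extent = _
  simp [mpeEquivConcept, pre1_ofPre]

lemma pre0_sSup (S : Set (MPE E)) : pre0 (completeLattice.sSup S).1 = ⋂ φ ∈ S, pre0 φ.1 := by
  change (mpeEquivConcept (mpeEquivConcept.symm _)).intent = _
  simp [mpeEquivConcept, pre0_ofPre (disjoint_lowerPolar_compl E _)]

lemma eq_sInf_iff {φ : MPE E} {S : Set (MPE E)} :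
    φ = completeLattice.sInf S ↔ pre1 φ.1 = ⋂ ψ ∈ S, pre1 ψ.1 := by
  rw [← pre1_sInf]
  exact ⟨fun h => h ▸ rfl, fun h => mpeEquivConcept.injective (Concept.ext h)⟩

lemma eq_sSup_iff {φ : MPE E} {S : Set (MPE E)} :
    φ = completeLattice.sSup S ↔ pre0 φ.1 = ⋂ ψ ∈ S, pre0 ψ.1 := by
  rw [← pre0_sSup]
  exact ⟨fun h => h ▸ rfl, fun h => mpeEquivConcept.injective (Concept.ext' h)⟩

end MPE

section Ultralimit

variable {ι Y : Type*}

noncomputable def ultralimit (U : Ultrafilter ι) (F : ι → PMap Y) : PMap Y := fun x =>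
  if ∀ᶠ i in U, F i x = some true then some true
  else if ∀ᶠ i in U, F i x = some false then some false else none

lemma ultralimit_eq_some_iff {U : Ultrafilter ι} {F : ι → PMap Y} {x : Y} {b : Bool} :
    ultralimit U F x = some b ↔ ∀ᶠ i in U, F i x = some b := by
  have : ¬((∀ᶠ i in U, F i x = some true) ∧ ∀ᶠ i in U, F i x = some false) :=
    fun ⟨h1, h0⟩ => by
      obtain ⟨i, h1, h0⟩ := (h1.and h0).exists
      simp [h1] at h0
  unfold ultralimit
  cases b <;> split_ifs <;> simp_all

end Ultralimit

section PHom

open Filter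

variable {L : Type*} [Lattice L] [BoundedOrder L]

lemma PHom.infClosed_pre1 {f : PMap L} (hf : PHom L f) : InfClosed (pre1 f) :=
  fun _ ha _ hb => (hf.2.2 ha hb).1

lemma PHom.supClosed_pre0 {f : PMap L} (hf : PHom L f) : SupClosed (pre0 f) :=
  fun _ ha _ hb => (hf.2.2 ha hb).2

lemma phom_ofPre {F I : Set L} (hF : IsUpperSet F) (hFinf : InfClosed F) (htop : ⊤ ∈ F)
    (hI : IsLowerSet I) (hIsup : SupClosed I) (hbot : ⊥ ∈ I) (hFI : Disjoint F I) :
    PHom L (ofPre F I) := by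
  have h1 : ∀ x, ofPre F I x = some true ↔ x ∈ F := Set.ext_iff.1 (pre1_ofPre F I)
  have h0 : ∀ x, ofPre F I x = some false ↔ x ∈ I := Set.ext_iff.1 (pre0_ofPre hFI)
  refine ⟨(h0 ⊥).2 hbot, (h1 ⊤).2 htop, fun a b x y ha hb => ?_⟩
  cases x <;> cases y <;> simp only [h0, h1, min_self, max_self, Bool.le_true,
    inf_of_le_left, inf_of_le_right, sup_of_le_left, sup_of_le_right] at ha hb ⊢
  exacts [⟨hI inf_le_left ha, hIsup ha hb⟩, ⟨hI inf_le_left ha, hF le_sup_right hb⟩,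
    ⟨hI inf_le_right hb, hF le_sup_left ha⟩, ⟨hFinf ha hb, hF le_sup_left ha⟩]

lemma phom_ultralimit {ι : Type*} {U : Ultrafilter ι} {F : ι → PMap L}
    (hF : ∀ i, PHom L (F i)) : PHom L (ultralimit U F) := by
  refine ⟨ultralimit_eq_some_iff.2 (.of_forall fun i => (hF i).1),
    ultralimit_eq_some_iff.2 (.of_forall fun i => (hF i).2.1), fun a b x y ha hb => ?_⟩
  have hab := (ultralimit_eq_some_iff.1 ha).and (ultralimit_eq_some_iff.1 hb)
  exact ⟨ultralimit_eq_some_iff.2 (hab.mono fun i h => ((hF i).2.2 h.1 h.2).1),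
    ultralimit_eq_some_iff.2 (hab.mono fun i h => ((hF i).2.2 h.1 h.2).2)⟩

theorem exists_mph_pExt {f : PMap L} (hf : PHom L f) : ∃ g ∈ MPHset L, PExt g f := by
  let P := {g : PMap L // PHom L g ∧ PExt g f}
  have hchain : ∀ c : Set P, IsChain (fun g h => PExt h.1 g.1) c →
      ∃ ub : P, ∀ g ∈ c, PExt ub.1 g.1 := by
    intro c hc
    rcases c.eq_empty_or_nonempty with rfl | ⟨g₀, hg₀⟩
    · exact ⟨⟨f, hf, fun _ _ h => h⟩, by simp⟩
    have : Nonempty c := ⟨⟨g₀, hg₀⟩⟩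
    have : Std.Refl fun g h : P => PExt h.1 g.1 := ⟨fun _ _ _ h => h⟩
    -- the union of the chain `c` is its limit along an ultrafilter containing all its tails
    let tail (g : c) : Set c := {h | PExt h.1.1 g.1.1}
    have : (⨅ g, 𝓟 (tail g)).NeBot := by
      refine iInf_neBot_of_directed (fun g g' => ?_)
        fun g => principal_neBot_iff.2 ⟨g, fun _ _ h => h⟩
      obtain ⟨k, hk, hgk, hg'k⟩ := hc.directedOn g.1 g.2 g'.1 g'.2
      exact ⟨⟨k, hk⟩, principal_mono.2 fun _ hh _ _ hx => hh (hgk hx),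
        principal_mono.2 fun _ hh _ _ hx => hh (hg'k hx)⟩
    let U := Ultrafilter.of (⨅ g, 𝓟 (tail g))
    refine ⟨⟨ultralimit U fun g => g.1.1, phom_ultralimit fun g => g.1.2.1,
      fun x b h => ultralimit_eq_some_iff.2 (.of_forall fun g => g.1.2.2 h)⟩,
      fun g hg x b h => ultralimit_eq_some_iff.2 ?_⟩
    exact mem_of_superset (Ultrafilter.of_le _
      (mem_iInf_of_mem ⟨g, hg⟩ (mem_principal_self _))) fun _ hg' => hg' h
  obtain ⟨m, hm⟩ := exists_maximal_of_chains_bounded hchain fun h₁ h₂ _ _ h => h₂ (h₁ h)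
  exact ⟨m.1, ⟨m.2.1, fun g hg hgm =>
    hgm.antisymm (hm ⟨g, hg, fun _ _ h => hgm (m.2.2 h)⟩ hgm)⟩, m.2.2⟩

end PHom

section MPH

variable {L : Type*} [Lattice L] [BoundedOrder L]

lemma PHom.disjoint_upperClosure_lowerClosure {f : PMap L} (hf : PHom L f) :
    Disjoint (upperClosure (pre1 f) : Set L) (lowerClosure (pre0 f)) := by
  refine Set.disjoint_left.2 fun x ⟨u, hu, hux⟩ ⟨v, hv, hxv⟩ => ?_
  have := (hf.2.2 hu hv).2
  rw [sup_eq_right.2 (hux.trans hxv), hv] at this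
  simp at this

lemma eq_ofPre_closure {f : PMap L} (hf : f ∈ MPHset L) :
    f = ofPre (upperClosure (pre1 f)) (lowerClosure (pre0 f)) := by
  obtain ⟨hph, hmax⟩ := hf
  refine (hmax _ (phom_ofPre (upperClosure _).upper ?_ (subset_upperClosure hph.2.1)
    (lowerClosure _).lower ?_ (subset_lowerClosure hph.1) hph.disjoint_upperClosure_lowerClosure)
    (pExt_iff.2 ⟨?_, ?_⟩)).symm
  · rintro _ ⟨u, hu, hua⟩ _ ⟨u', hu', hub⟩
    exact ⟨u ⊓ u', hph.infClosed_pre1 hu hu', inf_le_inf hua hub⟩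
  · rintro _ ⟨v, hv, hva⟩ _ ⟨v', hv', hvb⟩
    exact ⟨v ⊔ v', hph.supClosed_pre0 hv hv', sup_le_sup hva hvb⟩
  · rw [pre1_ofPre]
    exact subset_upperClosure
  · rw [pre0_ofPre hph.disjoint_upperClosure_lowerClosure]
    exact subset_lowerClosure

lemma isUpperSet_pre1 {f : PMap L} (hf : f ∈ MPHset L) : IsUpperSet (pre1 f) := by
  rw [eq_ofPre_closure hf, pre1_ofPre]
  exact (upperClosure _).upper

lemma isLowerSet_pre0 {f : PMap L} (hf : f ∈ MPHset L) : IsLowerSet (pre0 f) := by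
  rw [eq_ofPre_closure hf, pre0_ofPre hf.1.disjoint_upperClosure_lowerClosure]
  exact (lowerClosure _).lower

lemma exists_mph_pre1_subset_eq_false {f : PMap L} (hf : f ∈ MPHset L) {v : L}
    (hv : f v ≠ some true) : ∃ q ∈ MPHset L, pre1 f ⊆ pre1 q ∧ q v = some false := by
  have hd : Disjoint (pre1 f) (Set.Iic v) :=
    Set.disjoint_left.2 fun _ hx hxv => hv (isUpperSet_pre1 hf hxv hx)
  obtain ⟨q, hq, hext⟩ := exists_mph_pExt (phom_ofPre (isUpperSet_pre1 hf)
    hf.1.infClosed_pre1 hf.1.2.1 (isLowerSet_Iic v) (fun _ ha _ hb => sup_le ha hb) bot_le hd)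
  rw [pExt_iff, pre1_ofPre, pre0_ofPre hd] at hext
  exact ⟨q, hq, hext.1, hext.2 le_rfl⟩

lemma exists_mph_pre0_subset_eq_true {f : PMap L} (hf : f ∈ MPHset L) {u : L}
    (hu : f u ≠ some false) : ∃ q ∈ MPHset L, pre0 f ⊆ pre0 q ∧ q u = some true := by
  have hd : Disjoint (Set.Ici u) (pre0 f) :=
    Set.disjoint_left.2 fun _ hux hx => hu (isLowerSet_pre0 hf hux hx)
  obtain ⟨q, hq, hext⟩ := exists_mph_pExt (phom_ofPre (isUpperSet_Ici u)
    (fun _ ha _ hb => le_inf ha hb) le_top (isLowerSet_pre0 hf) hf.1.supClosed_pre0 hf.1.1 hd)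
  rw [pExt_iff, pre1_ofPre, pre0_ofPre hd] at hext
  exact ⟨q, hq, hext.2, hext.1 le_rfl⟩

instance : Std.Refl (EM L) := ⟨fun f => erelP_iff_disjoint.2 (disjoint_pre1_pre0 f.1)⟩

lemma mem_lowerPolar_of_pre1_subset {B : Set (MPHsub L)} {f q : MPHsub L}
    (hf : f ∈ lowerPolar (EM L)ᶜ B) (hfq : pre1 f.1 ⊆ pre1 q.1) :
    q ∈ lowerPolar (EM L)ᶜ B :=
  fun _ hh hqh => hf hh (erelP_iff_disjoint.2 ((erelP_iff_disjoint.1 hqh).mono_left hfq))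

lemma mem_upperPolar_of_pre0_subset {A : Set (MPHsub L)} {h q : MPHsub L}
    (hh : h ∈ upperPolar (EM L)ᶜ A) (hhq : pre0 h.1 ⊆ pre0 q.1) :
    q ∈ upperPolar (EM L)ᶜ A :=
  fun _ hf hfq => hh hf (erelP_iff_disjoint.2 ((erelP_iff_disjoint.1 hfq).mono_right hhq))

lemma upperPolar_WaM (a : L) : upperPolar (EM L)ᶜ (WaM L a) = VaM L a := by
  refine Set.Subset.antisymm (fun g hg => ?_) fun g hg f hf hfg =>
    Set.disjoint_left.1 (erelP_iff_disjoint.1 hfg) hf hg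
  by_contra hga
  obtain ⟨q, hq, hsub, hqa⟩ := exists_mph_pre0_subset_eq_true g.2 hga
  exact hg (a := ⟨q, hq⟩) hqa (erelP_iff_disjoint.2 ((disjoint_pre1_pre0 q).mono_right hsub))

lemma lowerPolar_VaM (a : L) : lowerPolar (EM L)ᶜ (VaM L a) = WaM L a := by
  refine Set.Subset.antisymm (fun f hf => ?_) fun f hf g hg hfg =>
    Set.disjoint_left.1 (erelP_iff_disjoint.1 hfg) hf hg
  by_contra hfa
  obtain ⟨q, hq, hsub, hqa⟩ := exists_mph_pre1_subset_eq_false f.2 hfa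
  exact hf (b := ⟨q, hq⟩) hqa (erelP_iff_disjoint.2 ((disjoint_pre1_pre0 q).mono_left hsub))

lemma evalM_mem_MPE (a : L) : evalM L a ∈ MPE (EM L) :=
  mem_MPE_iff.2 ⟨upperPolar_WaM a, lowerPolar_VaM a⟩

end MPH

section Topology

variable {L : Type*} [Lattice L] [BoundedOrder L]

attribute [local instance] tauM

lemma isClosed_VaM (a : L) : IsClosed (VaM L a) :=
  isOpen_compl_iff.1 (TopologicalSpace.isOpen_generateFrom_of_mem ⟨a, Or.inl rfl⟩)

lemma isClosed_WaM (a : L) : IsClosed (WaM L a) :=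
  isOpen_compl_iff.1 (TopologicalSpace.isOpen_generateFrom_of_mem ⟨a, Or.inr rfl⟩)

/-- Every ultrafilter on `MPH(L, 2_B)` converges to any maximal extension of its pointwise limit. -/
instance : CompactSpace (MPHsub L) := by
  refine isCompact_univ_iff.1 (isCompact_iff_ultrafilter_le_nhds.2 fun 𝒰 _ => ?_)
  obtain ⟨g, hg, hext⟩ :=
    exists_mph_pExt (phom_ultralimit (U := 𝒰) fun f : MPHsub L => f.2.1)
  refine ⟨⟨g, hg⟩, Set.mem_univ _, Filter.tendsto_id'.1
    (TopologicalSpace.tendsto_nhds_generateFrom_iff.2 ?_)⟩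
  rintro s ⟨a, rfl | rfl⟩ hgs <;>
    exact Ultrafilter.compl_mem_iff_notMem.2 fun h => hgs (hext (ultralimit_eq_some_iff.2 h))

end Topology

section ClosedPreimages

variable {L : Type*} [Lattice L] [BoundedOrder L]

attribute [local instance] tauM

/-- If `g ∉ A`, some `h ∈ B` has `(g, h) ∈ E`; compactness and closedness of `A` then yield a
`v ∈ h⁻¹(0)` with `A ⊆ W_v`, and `W_v` separates `g` from `A`. -/
theorem isClosed_iff_exists_eq_biInter_WaM {A B : Set (MPHsub L)}
    (hAB : lowerPolar (EM L)ᶜ B = A) :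
    IsClosed A ↔ ∃ K : Set L, A = ⋂ b ∈ K, WaM L b := by
  refine ⟨fun hA => ?_, fun ⟨K, hK⟩ => hK ▸ isClosed_biInter fun b _ => isClosed_WaM b⟩
  refine ⟨{b | A ⊆ WaM L b}, Set.Subset.antisymm (Set.subset_iInter₂ fun _ hb => hb)
    fun g hg => ?_⟩
  by_contra hgA
  obtain ⟨h, hhB, hgh⟩ : ∃ h ∈ B, EM L g h := by
    simpa [← hAB, mem_lowerPolar_iff] using hgA
  suffices ∃ v ∈ pre0 h.1, A ⊆ WaM L v by
    obtain ⟨v, hv, hAv⟩ := this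
    exact Set.disjoint_left.1 (erelP_iff_disjoint.1 hgh) (Set.mem_iInter₂.1 hg v hAv) hv
  by_contra! hAh
  let C (v : pre0 h.1) : Set (MPHsub L) := A ∩ VaM L v
  have hC : ∀ v, (C v).Nonempty := fun v => by
    obtain ⟨f, hfA, hfv⟩ := Set.not_subset.1 (hAh v v.2)
    obtain ⟨q, hq, hsub, hqv⟩ := exists_mph_pre1_subset_eq_false f.2 hfv
    exact ⟨⟨q, hq⟩, hAB ▸ mem_lowerPolar_of_pre1_subset (hAB ▸ hfA) hsub, hqv⟩
  have hdir : Directed (· ⊇ ·) C := fun v w =>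
    ⟨⟨v.1 ⊔ w.1, h.2.1.supClosed_pre0 v.2 w.2⟩,
      fun f hf => ⟨hf.1, isLowerSet_pre0 f.2 le_sup_left hf.2⟩,
      fun f hf => ⟨hf.1, isLowerSet_pre0 f.2 le_sup_right hf.2⟩⟩
  have : Nonempty (pre0 h.1) := ⟨⟨⊥, h.2.1.1⟩⟩
  obtain ⟨f, hf⟩ := IsCompact.nonempty_iInter_of_directed_nonempty_isCompact_isClosed C hdir hC
    (fun v => (hA.inter (isClosed_VaM v.1)).isCompact) fun v => hA.inter (isClosed_VaM v.1)
  obtain ⟨x, hxf, hxh⟩ := Set.not_disjoint_iff.1 fun hd =>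
    (hAB ▸ (Set.mem_iInter.1 hf ⟨⊥, h.2.1.1⟩).1) hhB (erelP_iff_disjoint.2 hd)
  exact Set.disjoint_left.1 (disjoint_pre1_pre0 f.1) hxf (Set.mem_iInter.1 hf ⟨x, hxh⟩).2

theorem isClosed_iff_exists_eq_biInter_VaM {A B : Set (MPHsub L)}
    (hAB : upperPolar (EM L)ᶜ A = B) :
    IsClosed B ↔ ∃ M : Set L, B = ⋂ a ∈ M, VaM L a := by
  refine ⟨fun hB => ?_, fun ⟨M, hM⟩ => hM ▸ isClosed_biInter fun a _ => isClosed_VaM a⟩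
  refine ⟨{a | B ⊆ VaM L a}, Set.Subset.antisymm (Set.subset_iInter₂ fun _ ha => ha)
    fun g hg => ?_⟩
  by_contra hgB
  obtain ⟨f, hfA, hfg⟩ : ∃ f ∈ A, EM L f g := by
    simpa [← hAB, mem_upperPolar_iff] using hgB
  suffices ∃ u ∈ pre1 f.1, B ⊆ VaM L u by
    obtain ⟨u, hu, hBu⟩ := this
    exact Set.disjoint_left.1 (erelP_iff_disjoint.1 hfg) hu (Set.mem_iInter₂.1 hg u hBu)
  by_contra! hBf
  let C (u : pre1 f.1) : Set (MPHsub L) := B ∩ WaM L u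
  have hC : ∀ u, (C u).Nonempty := fun u => by
    obtain ⟨h, hhB, hhu⟩ := Set.not_subset.1 (hBf u u.2)
    obtain ⟨q, hq, hsub, hqu⟩ := exists_mph_pre0_subset_eq_true h.2 hhu
    exact ⟨⟨q, hq⟩, hAB ▸ mem_upperPolar_of_pre0_subset (hAB ▸ hhB) hsub, hqu⟩
  have hdir : Directed (· ⊇ ·) C := fun u w =>
    ⟨⟨u.1 ⊓ w.1, f.2.1.infClosed_pre1 u.2 w.2⟩,
      fun h hh => ⟨hh.1, isUpperSet_pre1 h.2 inf_le_left hh.2⟩,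
      fun h hh => ⟨hh.1, isUpperSet_pre1 h.2 inf_le_right hh.2⟩⟩
  have : Nonempty (pre1 f.1) := ⟨⟨⊤, f.2.1.2.1⟩⟩
  obtain ⟨h, hh⟩ := IsCompact.nonempty_iInter_of_directed_nonempty_isCompact_isClosed C hdir hC
    (fun u => (hB.inter (isClosed_WaM u.1)).isCompact) fun u => hB.inter (isClosed_WaM u.1)
  obtain ⟨x, hxf, hxh⟩ := Set.not_disjoint_iff.1 fun hd =>
    (hAB ▸ (Set.mem_iInter.1 hh ⟨⊤, f.2.1.2.1⟩).1) hfA (erelP_iff_disjoint.2 hd)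
  exact Set.disjoint_left.1 (disjoint_pre1_pre0 h.1) (Set.mem_iInter.1 hh ⟨x, hxf⟩).2 hxh

end ClosedPreimages

/-- **Filter and ideal elements.** Let `L` be a bounded lattice,
`X = D♭(L)` and `φ ∈ C(X) = MPE(X,2)`. The following are equivalent:
(1) `φ` is a filter element (a meet of elements `e_a`); (2) `φ⁻¹(1) = ⋂ {W_b : b ∈ K}`
for some `K ⊆ L`; (3) `φ⁻¹(1)` is `τ`-closed. Dually: (1') `φ` is an ideal
element (a join of elements `e_a`); (2') `φ⁻¹(0) = ⋂ {V_a : a ∈ M}` for some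
`M ⊆ L`; (3') `φ⁻¹(0)` is `τ`-closed. -/
theorem stmt_9 (L : Type*) [Lattice L] [BoundedOrder L] :
    ∃ inst : CompleteLattice (CX L),
      (∀ φ ψ : CX L, inst.le φ ψ ↔ pre1 φ.1 ⊆ pre1 ψ.1) ∧
      ∃ e : L → CX L,
        (∀ a : L, (e a).1 = evalM L a) ∧
        ∀ φ : CX L,
          (((∃ S : Set L, φ = inst.sInf (e '' S)) ↔
              ∃ K : Set L, pre1 φ.1 = ⋂ b ∈ K, WaM L b) ∧
           ((∃ S : Set L, φ = inst.sInf (e '' S)) ↔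
              @IsClosed _ (tauM L) (pre1 φ.1))) ∧
          (((∃ S : Set L, φ = inst.sSup (e '' S)) ↔
              ∃ M : Set L, pre0 φ.1 = ⋂ a ∈ M, VaM L a) ∧
           ((∃ S : Set L, φ = inst.sSup (e '' S)) ↔
              @IsClosed _ (tauM L) (pre0 φ.1))) := by
  let e (a : L) : CX L := ⟨evalM L a, evalM_mem_MPE a⟩
  refine ⟨MPE.completeLattice, fun _ _ => MPE.le_iff_pre1_subset, e, fun _ => rfl, fun φ => ?_⟩
  have hfilter : (∃ S, φ = MPE.completeLattice.sInf (e '' S)) ↔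
      ∃ K, pre1 φ.1 = ⋂ b ∈ K, WaM L b := exists_congr fun S => by
    rw [MPE.eq_sInf_iff, Set.biInter_image]
    rfl
  have hideal : (∃ S, φ = MPE.completeLattice.sSup (e '' S)) ↔
      ∃ M, pre0 φ.1 = ⋂ a ∈ M, VaM L a := exists_congr fun S => by
    rw [MPE.eq_sSup_iff, Set.biInter_image]
    rfl
  obtain ⟨hpre0, hpre1⟩ := mem_MPE_iff.1 φ.2
  exact ⟨⟨hfilter, hfilter.trans (isClosed_iff_exists_eq_biInter_WaM hpre1).symm⟩,
    hideal, hideal.trans (isClosed_iff_exists_eq_biInter_VaM hpre0).symm⟩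

end CanExt
end

section
/- Let L be a bounded lattice and let f,g ∈ SPH(L,2_B). Then: (i) (f,g) ∈ E if and only if there exists h ∈ SPH(L,2_B) with f ≤₁ h and g ≤₂ h; (ii) f ≤₂ g if and only if there is no h ∈ SPH(L,2_B) with (h,g) ∈ E and (h,f) ∉ E; (iii) f ≤₁ g if and only if there is no h ∈ SPH(L,2_B) with (g,h) ∈ E and (f,h) ∉ E. -/
namespace CanExt

open Classical

/-!
For SPHs, `(f, g) ∈ E` says exactly that `f⁻¹(1)` and `g⁻¹(0)` are disjoint, and every disjoint
pair of a filter `F` and an ideal `I` is `(h⁻¹(1), h⁻¹(0))` for some SPH `h`. This gives (i) and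
the forward directions of (ii), (iii) by monotonicity. Conversely, a point `x ∈ f⁻¹(0) \ g⁻¹(0)`
yields the SPH `h` with `h⁻¹(1) = ↑x` and `h⁻¹(0) = g⁻¹(0)`, which witnesses the failure in (ii);
(iii) is dual, using `h⁻¹(1) = g⁻¹(1)` and `h⁻¹(0) = ↓x`.
-/


theorem errelP_iff_disjoint {X : Type*} {f g : PMap X} :
    ErelP f g ↔ Disjoint (pre1 f) (pre0 g) := by
  rw [Set.disjoint_left]
  refine ⟨fun h x hx hx0 => absurd (h hx hx0) (by decide), fun h x a b hfa hgb => ?_⟩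
  cases a
  · exact Bool.false_le b
  · cases b
    · exact absurd hgb (h hfa)
    · exact le_rfl

noncomputable def PMap.ofSets {X : Type*} (F I : Set X) : PMap X :=
  fun x => if x ∈ F then some true else if x ∈ I then some false else none

theorem PMap.pre1_ofSets {X : Type*} (F I : Set X) : pre1 (PMap.ofSets F I) = F := by
  ext x
  by_cases hF : x ∈ F <;> simp [pre1, PMap.ofSets, hF]

theorem PMap.pre0_ofSets {X : Type*} {F I : Set X} (hd : Disjoint F I) :
    pre0 (PMap.ofSets F I) = I := by
  ext x
  by_cases hF : x ∈ F
  · simp [pre0, PMap.ofSets, hF, Set.disjoint_left.1 hd hF]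
  · by_cases hI : x ∈ I <;> simp [pre0, PMap.ofSets, hF, hI]

section Lattice

variable {L : Type*} [Lattice L]

theorem isLatFilter_Ici (x : L) : IsLatFilter L (Set.Ici x) :=
  ⟨⟨x, le_rfl⟩, fun _ _ ha hab => ha.trans hab, fun _ _ => le_inf⟩

theorem isLatIdeal_Iic (x : L) : IsLatIdeal L (Set.Iic x) :=
  ⟨⟨x, le_rfl⟩, fun _ _ ha hba => hba.trans ha, fun _ _ => sup_le⟩

theorem exists_sph_pre1_pre0 {F I : Set L} (hF : IsLatFilter L F) (hI : IsLatIdeal L I)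
    (hd : Disjoint F I) : ∃ h : SPHsub L, pre1 h.1 = F ∧ pre0 h.1 = I := by
  refine ⟨⟨PMap.ofSets F I, ?_⟩, PMap.pre1_ofSets F I, PMap.pre0_ofSets hd⟩
  rw [SPHset, Set.mem_ofPred_eq, PMap.pre1_ofSets, PMap.pre0_ofSets hd]
  exact ⟨hF, hI, hd⟩

theorem es_iff_disjoint {f g : SPHsub L} : ES L f g ↔ Disjoint (pre1 f.1) (pre0 g.1) :=
  errelP_iff_disjoint

theorem es_iff_exists_le1_le2 {f g : SPHsub L} :
    ES L f g ↔ ∃ h : SPHsub L, le1 f.1 h.1 ∧ le2 g.1 h.1 := by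
  rw [es_iff_disjoint]
  refine ⟨fun hd => ?_, fun ⟨h, hf, hg⟩ => h.2.2.2.mono hf hg⟩
  obtain ⟨h, h1, h0⟩ := exists_sph_pre1_pre0 f.2.1 g.2.2.1 hd
  exact ⟨h, h1.symm.subset, h0.symm.subset⟩

theorem le2_iff_forall_es_imp {f g : SPHsub L} :
    le2 f.1 g.1 ↔ ∀ h : SPHsub L, ES L h g → ES L h f := by
  simp only [es_iff_disjoint]
  refine ⟨fun hfg h hhg => hhg.mono_right hfg, fun H x hxf => ?_⟩
  by_contra hxg
  have hd : Disjoint (Set.Ici x) (pre0 g.1) :=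
    Set.disjoint_left.2 fun y hxy hyg => hxg (g.2.2.1.2.1 hyg hxy)
  obtain ⟨h, h1, -⟩ := exists_sph_pre1_pre0 (isLatFilter_Ici x) g.2.2.1 hd
  rw [← h1] at hd
  exact Set.disjoint_left.1 (H h hd) (h1 ▸ Set.self_mem_Ici) hxf

theorem le1_iff_forall_es_imp {f g : SPHsub L} :
    le1 f.1 g.1 ↔ ∀ h : SPHsub L, ES L g h → ES L f h := by
  simp only [es_iff_disjoint]
  refine ⟨fun hfg h hgh => hgh.mono_left hfg, fun H x hxf => ?_⟩
  by_contra hxg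
  have hd : Disjoint (pre1 g.1) (Set.Iic x) :=
    Set.disjoint_left.2 fun y hyg hyx => hxg (g.2.1.2.1 hyg hyx)
  obtain ⟨h, -, h0⟩ := exists_sph_pre1_pre0 g.2.1 (isLatIdeal_Iic x) hd
  rw [← h0] at hd
  exact Set.disjoint_left.1 (H h hd) hxf (h0 ▸ Set.self_mem_Iic)

end Lattice

theorem stmt_12_general (L : Type*) [Lattice L] (f g : SPHsub L) :
    (ES L f g ↔ ∃ h : SPHsub L, le1 f.1 h.1 ∧ le2 g.1 h.1) ∧
    (le2 f.1 g.1 ↔ ¬ ∃ h : SPHsub L, ES L h g ∧ ¬ ES L h f) ∧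
    (le1 f.1 g.1 ↔ ¬ ∃ h : SPHsub L, ES L g h ∧ ¬ ES L f h) := by
  simp only [not_exists, not_and, not_not]
  exact ⟨es_iff_exists_le1_le2, le2_iff_forall_es_imp, le1_iff_forall_es_imp⟩

/-- Let `L` be a bounded lattice and `f, g ∈ SPH(L,2_B)`.
Then: (i) `(f,g) ∈ E` iff there is `h ∈ SPH(L,2_B)` with `f ≤₁ h` and
`g ≤₂ h`; (ii) `f ≤₂ g` iff there is no `h` with `(h,g) ∈ E` and `(h,f) ∉ E`;
(iii) `f ≤₁ g` iff there is no `h` with `(g,h) ∈ E` and `(f,h) ∉ E`. -/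
theorem stmt_12 (L : Type*) [Lattice L] [BoundedOrder L] (f g : SPHsub L) :
    (ES L f g ↔ ∃ h : SPHsub L, le1 f.1 h.1 ∧ le2 g.1 h.1) ∧
    (le2 f.1 g.1 ↔ ¬ ∃ h : SPHsub L, ES L h g ∧ ¬ ES L h f) ∧
    (le1 f.1 g.1 ↔ ¬ ∃ h : SPHsub L, ES L g h ∧ ¬ ES L f h) :=
  stmt_12_general L f g

end CanExt
end
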